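/- For every integer k ≥ 2 and every real λ > 0, neither 1 nor k+1 is a mode of the Poisson distribution of order k with parameter λ. -/

import Mathlib

/-- Scaled pmf of the Poisson distribution of order `k`:
`h_k(n;λ) = Σ λ^(n₁+⋯+n_k)/(n₁!⋯n_k!)`, summed over all `k`-tuples `(n₁,…,n_k)`
of nonnegative integers with `n₁ + 2n₂ + ⋯ + k·n_k = n`.
(Each `n_i` is at most `n` whenever the constraint holds, so the range is exhaustive.) -/
noncomputable def poissonOrderH (k n : ℕ) (lam : ℝ) : ℝ :=
  ∑ t ∈ (Fintype.piFinset fun _ : Fin k => Finset.range (n + 1)) |>.filter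
      (fun t => ∑ i : Fin k, ((i : ℕ) + 1) * t i = n),
    lam ^ (∑ i : Fin k, t i) / ∏ i : Fin k, (Nat.factorial (t i) : ℝ)

/-- Pmf of the Poisson distribution of order `k`: `f_k(n;λ) = e^{-kλ} h_k(n;λ)`. -/
noncomputable def poissonOrderPmf (k n : ℕ) (lam : ℝ) : ℝ :=
  Real.exp (-(k * lam)) * poissonOrderH k n lam

/-- `m` is a mode of the Poisson distribution of order `k` with parameter `lam`. -/
def IsMode (k : ℕ) (lam : ℝ) (m : ℕ) : Prop :=
  ∀ n : ℕ, poissonOrderPmf k n lam ≤ poissonOrderPmf k m lam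

/-!
Write `h n` for `poissonOrderH k n λ`, the coefficients of `exp (λ (x + x² + ⋯ + xᵏ))`.
Removing one part `i` from a tuple gives the recurrence
`n h n = λ ∑_{1 ≤ i ≤ min k n} i h (n - i)`.
Thus `h 1 = λ < λ + λ²/2 = h 2`, so `1` is not a mode. For `n ≥ k` the recurrence has fixed
length `k`, and its second difference at `n = k` is
`(k+2) h (k+2) - 2 (k+1) h (k+1) + k h k = λ (h (k+1) - (k+1) λ + k)`.
If `k + 1` were a mode the left side would be `≤ 0`, so `h (k+1) ≤ (k+1) λ - k`. This contradicts
`h (k+1) ≥ h k ≥ λ + (k-1) λ²/2` when `k ≥ 3`, and `h 3 = λ² + λ³/6` when `k = 2`.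
-/

open Finset Function

theorem sum_range_sub_mul_succ_sub_sum {R : Type*} [CommRing R] (g : ℕ → R) (k m : ℕ) :
    ∑ j ∈ range k, ((k : R) - j) * g (m + 1 + j) - ∑ j ∈ range k, ((k : R) - j) * g (m + j)
      = ∑ j ∈ range k, g (m + 1 + j) - k * g m := by
  have hfirst : ∑ j ∈ range (k + 1), ((k : R) + 1 - j) * g (m + j)
      = ∑ j ∈ range k, ((k : R) - j) * g (m + 1 + j) + (k + 1) * g m := by
    rw [sum_range_succ']
    push_cast
    simp only [add_assoc, add_comm 1, sub_zero, add_zero, add_sub_add_right_eq_sub]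
  have hlast : ∑ j ∈ range (k + 1), ((k : R) + 1 - j) * g (m + j)
      = ∑ j ∈ range k, ((k : R) - j) * g (m + j) + ∑ j ∈ range k, g (m + j) + g (m + k) := by
    rw [sum_range_succ, ← sum_add_distrib]
    congr 1
    · exact sum_congr rfl fun _ _ => by ring
    · ring
  have hg : ∑ j ∈ range (k + 1), g (m + j) = ∑ j ∈ range k, g (m + 1 + j) + g m := by
    rw [sum_range_succ']
    simp only [add_assoc, add_comm 1, add_zero]
  rw [sum_range_succ] at hg
  linear_combination hlast - hfirst + hg

theorem sum_range_sub_mul_second_diff {R : Type*} [CommRing R] (g : ℕ → R) (k m : ℕ) :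
    ∑ j ∈ range k, ((k : R) - j) * g (m + 2 + j) - 2 * ∑ j ∈ range k, ((k : R) - j) * g (m + 1 + j)
      + ∑ j ∈ range k, ((k : R) - j) * g (m + j)
      = g (m + k + 1) - (k + 1) * g (m + 1) + k * g m := by
  have h0 := sum_range_sub_mul_succ_sub_sum g k m
  have h1 := sum_range_sub_mul_succ_sub_sum g k (m + 1)
  have htel : ∑ j ∈ range (k + 1), g (m + 1 + j)
      = ∑ j ∈ range k, g (m + 2 + j) + g (m + 1) := by
    rw [sum_range_succ']
    exact congrArg₂ (· + ·) (sum_congr rfl fun j _ => by congr 1; omega)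
      (by rw [add_zero])
  rw [sum_range_succ, add_right_comm m 1 k] at htel
  rw [show m + 1 + 1 = m + 2 by omega] at h1
  linear_combination h1 - h0 - htel

namespace PoissonOrder

def tuples (k n : ℕ) : Finset (Fin k → ℕ) :=
  (Fintype.piFinset fun _ : Fin k => range (n + 1)).filter
    (fun t => ∑ i : Fin k, ((i : ℕ) + 1) * t i = n)

noncomputable def weight {k : ℕ} (lam : ℝ) (t : Fin k → ℕ) : ℝ :=
  lam ^ (∑ i : Fin k, t i) / ∏ i : Fin k, ((t i).factorial : ℝ)

theorem poissonOrderH_eq_sum_weight (k n : ℕ) (lam : ℝ) :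
    poissonOrderH k n lam = ∑ t ∈ tuples k n, weight lam t := rfl

theorem mem_tuples {k n : ℕ} {t : Fin k → ℕ} :
    t ∈ tuples k n ↔ ∑ i : Fin k, ((i : ℕ) + 1) * t i = n := by
  refine ⟨fun h => (mem_filter.1 h).2, fun h => mem_filter.2 ⟨?_, h⟩⟩
  refine Fintype.mem_piFinset.2 fun i => mem_range.2 (Nat.lt_succ_of_le ?_)
  calc t i ≤ ((i : ℕ) + 1) * t i := Nat.le_mul_of_pos_left _ i.val.succ_pos
    _ ≤ n := h ▸ single_le_sum (f := fun i : Fin k => ((i : ℕ) + 1) * t i)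
        (fun _ _ => Nat.zero_le _) (mem_univ i)

theorem weight_nonneg {k : ℕ} {lam : ℝ} (hlam : 0 ≤ lam) (t : Fin k → ℕ) :
    0 ≤ weight lam t := by
  unfold weight; positivity

theorem poissonOrderH_nonneg {k : ℕ} (n : ℕ) {lam : ℝ} (hlam : 0 ≤ lam) :
    0 ≤ poissonOrderH k n lam :=
  sum_nonneg fun t _ => weight_nonneg hlam t

theorem poissonOrderH_zero (k : ℕ) (lam : ℝ) : poissonOrderH k 0 lam = 1 := by
  have : tuples k 0 = {0} := by
    ext t
    simp [mem_tuples, sum_eq_zero_iff, funext_iff]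
  simp [poissonOrderH_eq_sum_weight, this, weight]

theorem sum_mul_update_succ {ι : Type*} [Fintype ι] [DecidableEq ι] (c s : ι → ℕ) (i : ι) :
    ∑ j, c j * update s i (s i + 1) j = ∑ j, c j * s j + c i := by
  rw [Fintype.sum_eq_add_sum_compl i, Fintype.sum_eq_add_sum_compl i (fun j => c j * s j),
    update_self, sum_congr rfl fun j hj => by rw [update_of_ne (by simpa using hj)]]
  ring

theorem prod_factorial_update_succ {ι : Type*} [Fintype ι] [DecidableEq ι] (s : ι → ℕ) (i : ι) :
    ∏ j, ((update s i (s i + 1) j).factorial : ℝ) = (s i + 1) * ∏ j, ((s j).factorial : ℝ) := by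
  rw [Fintype.prod_eq_mul_prod_compl i, Fintype.prod_eq_mul_prod_compl i (fun j => _),
    update_self, prod_congr rfl fun j hj => by rw [update_of_ne (by simpa using hj)],
    Nat.factorial_succ]
  push_cast; ring

theorem succ_mul_weight_update_succ {k : ℕ} (lam : ℝ) (s : Fin k → ℕ) (i : Fin k) :
    ((s i : ℝ) + 1) * weight lam (update s i (s i + 1)) = lam * weight lam s := by
  have hsum := sum_mul_update_succ (fun _ => 1) s i
  simp only [one_mul] at hsum
  rw [weight, weight, hsum, prod_factorial_update_succ, pow_succ]
  have : ∏ j, ((s j).factorial : ℝ) ≠ 0 := prod_ne_zero_iff.2 fun j _ => by positivity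
  field_simp

theorem sum_coord_mul_weight {k : ℕ} (lam : ℝ) (i : Fin k) (m : ℕ) :
    ∑ t ∈ tuples k (m + ((i : ℕ) + 1)), (t i : ℝ) * weight lam t
      = lam * poissonOrderH k m lam := by
  rw [poissonOrderH_eq_sum_weight, mul_sum,
    ← sum_filter_of_ne (p := fun t => t i ≠ 0) fun t _ h h0 => h (by simp [h0])]
  symm
  -- `s ↦ s + eᵢ` maps `tuples k m` bijectively onto the `t ∈ tuples k (m + i + 1)` with `t i ≠ 0`
  refine sum_nbij' (fun s => update s i (s i + 1)) (fun t => update t i (t i - 1))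
    (fun s hs => ?_) (fun t ht => ?_) (fun s _ => by simp) (fun t ht => ?_)
    (fun s _ => by simp [succ_mul_weight_update_succ])
  · rw [mem_filter, mem_tuples, sum_mul_update_succ, mem_tuples.1 hs]
    simp
  · obtain ⟨ht, hti⟩ := mem_filter.1 ht
    rw [mem_tuples] at ht ⊢
    have := sum_mul_update_succ (fun j : Fin k => (j : ℕ) + 1) (update t i (t i - 1)) i
    simp only [update_self, update_idem, Nat.sub_add_cancel (Nat.one_le_iff_ne_zero.2 hti),
      update_eq_self] at this
    omega
  · have hti := (mem_filter.1 ht).2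
    simp [Nat.sub_add_cancel (Nat.one_le_iff_ne_zero.2 hti)]

theorem sum_coord_mul_weight_of_lt {k n : ℕ} (lam : ℝ) (i : Fin k) (hn : n < (i : ℕ) + 1) :
    ∑ t ∈ tuples k n, (t i : ℝ) * weight lam t = 0 := by
  refine sum_eq_zero fun t ht => ?_
  have : ((i : ℕ) + 1) * t i ≤ n := (mem_tuples.1 ht) ▸ single_le_sum
    (f := fun j : Fin k => ((j : ℕ) + 1) * t j) (fun _ _ => Nat.zero_le _) (mem_univ i)
  have : t i = 0 := by nlinarith
  simp [this]

theorem natCast_mul_poissonOrderH (k n : ℕ) (lam : ℝ) :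
    (n : ℝ) * poissonOrderH k n lam
      = lam * ∑ i ∈ range (min k n), ((i : ℝ) + 1) * poissonOrderH k (n - (i + 1)) lam := by
  have hcoord (i : Fin k) : ∑ t ∈ tuples k n, (t i : ℝ) * weight lam t
      = if (i : ℕ) < n then lam * poissonOrderH k (n - (i + 1)) lam else 0 := by
    split_ifs with hi
    · obtain ⟨m, rfl⟩ : ∃ m, n = m + ((i : ℕ) + 1) := ⟨n - (i + 1), by omega⟩
      rw [Nat.add_sub_cancel, sum_coord_mul_weight]
    · exact sum_coord_mul_weight_of_lt lam i (by omega)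
  calc (n : ℝ) * poissonOrderH k n lam
      = ∑ t ∈ tuples k n, ∑ i : Fin k, ((i : ℝ) + 1) * ((t i : ℝ) * weight lam t) := by
        rw [poissonOrderH_eq_sum_weight, mul_sum]
        refine sum_congr rfl fun t ht => ?_
        rw [← mem_tuples.1 ht]
        push_cast
        simp only [sum_mul, mul_assoc]
    _ = ∑ i : Fin k, if (i : ℕ) < n then
          lam * (((i : ℝ) + 1) * poissonOrderH k (n - (i + 1)) lam) else 0 := by
        rw [sum_comm]
        refine sum_congr rfl fun i _ => ?_
        rw [← mul_sum, hcoord]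
        split_ifs <;> ring
    _ = _ := by
        rw [Fin.sum_univ_eq_sum_range (fun i => if i < n then
          lam * (((i : ℝ) + 1) * poissonOrderH k (n - (i + 1)) lam) else 0), ← sum_filter,
          mul_sum]
        congr 1
        ext i
        simp

theorem succ_mul_poissonOrderH_succ {k n : ℕ} (hn : n < k) (lam : ℝ) :
    ((n : ℝ) + 1) * poissonOrderH k (n + 1) lam
      = lam * ∑ i ∈ range (n + 1), ((i : ℝ) + 1) * poissonOrderH k (n - i) lam := by
  simpa [min_eq_right hn.nat_succ_le] using natCast_mul_poissonOrderH k (n + 1) lam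

theorem add_mul_poissonOrderH_add (k m : ℕ) (lam : ℝ) :
    ((m : ℝ) + k) * poissonOrderH k (m + k) lam
      = lam * ∑ j ∈ range k, ((k : ℝ) - j) * poissonOrderH k (m + j) lam := by
  rw [← Nat.cast_add, natCast_mul_poissonOrderH, min_eq_left (Nat.le_add_left k m),
    ← sum_range_reflect]
  refine congrArg (lam * ·) (sum_congr rfl fun j hj => ?_)
  have hj : j < k := mem_range.1 hj
  rw [Nat.cast_sub (by omega), Nat.cast_sub (by omega)]
  congr 1
  · push_cast; ring
  · congr 1; omega

theorem poissonOrderH_second_diff (k m : ℕ) (lam : ℝ) :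
    ((m : ℝ) + k + 2) * poissonOrderH k (m + k + 2) lam
      - 2 * (((m : ℝ) + k + 1) * poissonOrderH k (m + k + 1) lam)
      + ((m : ℝ) + k) * poissonOrderH k (m + k) lam
      = lam * (poissonOrderH k (m + k + 1) lam - (k + 1) * poissonOrderH k (m + 1) lam
          + k * poissonOrderH k m lam) := by
  have h0 := add_mul_poissonOrderH_add k m lam
  have h1 := add_mul_poissonOrderH_add k (m + 1) lam
  have h2 := add_mul_poissonOrderH_add k (m + 2) lam
  have hd := sum_range_sub_mul_second_diff (fun n => poissonOrderH k n lam) k m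
  rw [add_right_comm m 1 k] at h1
  rw [add_right_comm m 2 k] at h2
  push_cast at h1 h2
  linear_combination h2 - 2 * h1 + h0 + lam * hd

theorem poissonOrderH_one {k : ℕ} (hk : 0 < k) (lam : ℝ) : poissonOrderH k 1 lam = lam := by
  simpa [poissonOrderH_zero] using succ_mul_poissonOrderH_succ hk lam

theorem poissonOrderH_two {k : ℕ} (hk : 1 < k) (lam : ℝ) :
    poissonOrderH k 2 lam = lam + lam ^ 2 / 2 := by
  have h := succ_mul_poissonOrderH_succ hk lam
  norm_num [sum_range_succ, poissonOrderH_zero, poissonOrderH_one (Nat.zero_lt_of_lt hk)] at h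
  linarith

theorem le_poissonOrderH_succ {k n : ℕ} (hn : n < k) {lam : ℝ} (hlam : 0 ≤ lam) :
    lam ≤ poissonOrderH k (n + 1) lam := by
  have h := succ_mul_poissonOrderH_succ hn lam
  rw [sum_range_succ, Nat.sub_self, poissonOrderH_zero, mul_one] at h
  have hrest : 0 ≤ ∑ i ∈ range n, ((i : ℝ) + 1) * poissonOrderH k (n - i) lam :=
    sum_nonneg fun i _ => mul_nonneg (by positivity) (poissonOrderH_nonneg _ hlam)
  refine le_of_mul_le_mul_left ?_ (by positivity : (0 : ℝ) < n + 1)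
  nlinarith

theorem lam_add_le_poissonOrderH_succ {k n : ℕ} (hn : n < k) {lam : ℝ} (hlam : 0 ≤ lam) :
    lam + n * lam ^ 2 / 2 ≤ poissonOrderH k (n + 1) lam := by
  have h := succ_mul_poissonOrderH_succ hn lam
  rw [sum_range_succ, Nat.sub_self, poissonOrderH_zero, mul_one] at h
  have hrest : ∑ i ∈ range n, ((i : ℝ) + 1) * lam
      ≤ ∑ i ∈ range n, ((i : ℝ) + 1) * poissonOrderH k (n - i) lam := by
    refine sum_le_sum fun i hi => mul_le_mul_of_nonneg_left ?_ (by positivity)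
    have hi : i < n := mem_range.1 hi
    simpa [Nat.sub_add_cancel (Nat.sub_pos_of_lt hi)] using
      le_poissonOrderH_succ (n := n - i - 1) (by omega) hlam
  have hgauss : ∑ i ∈ range n, ((i : ℝ) + 1) = n * (n + 1) / 2 := by
    clear h hrest hn
    induction n with
    | zero => simp
    | succ n ih => rw [sum_range_succ, ih]; push_cast; ring
  rw [← sum_mul, hgauss] at hrest
  refine le_of_mul_le_mul_left ?_ (by positivity : (0 : ℝ) < n + 1)
  nlinarith

theorem isMode_iff {k : ℕ} {lam : ℝ} {m : ℕ} :
    IsMode k lam m ↔ ∀ n, poissonOrderH k n lam ≤ poissonOrderH k m lam := by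
  simp only [IsMode, poissonOrderPmf, mul_le_mul_iff_right₀ (Real.exp_pos _)]

theorem poissonOrderH_succ_le_of_le_of_le {k : ℕ} (hk : 0 < k) {lam : ℝ} (hlam : 0 < lam)
    (hle : poissonOrderH k k lam ≤ poissonOrderH k (k + 1) lam)
    (hge : poissonOrderH k (k + 2) lam ≤ poissonOrderH k (k + 1) lam) :
    poissonOrderH k (k + 1) lam ≤ (k + 1) * lam - k := by
  have h := poissonOrderH_second_diff k 0 lam
  simp only [zero_add, CharP.cast_eq_zero, poissonOrderH_one hk, poissonOrderH_zero] at h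
  refine le_of_mul_le_mul_left ?_ hlam
  nlinarith

end PoissonOrder

open PoissonOrder

theorem stmt_16 (k : ℕ) (hk : 2 ≤ k) (lam : ℝ) (hlam : 0 < lam) :
    ¬ IsMode k lam 1 ∧ ¬ IsMode k lam (k + 1) := by
  refine ⟨fun hmode => ?_, fun hmode => ?_⟩
  · have h := isMode_iff.1 hmode 2
    rw [poissonOrderH_two hk, poissonOrderH_one (by omega)] at h
    nlinarith
  have hle := isMode_iff.1 hmode k
  have hM := poissonOrderH_succ_le_of_le_of_le (by omega) hlam hle (isMode_iff.1 hmode (k + 2))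
  obtain rfl | hk3 := hk.eq_or_lt
  · have h3 := add_mul_poissonOrderH_add 2 1 lam
    norm_num [sum_range_succ, poissonOrderH_one, poissonOrderH_two] at h3 hM
    -- `h 3 = λ² + λ³/6`, and `λ³/6 + λ² - 3λ + 2 > 0` for `λ > 0`
    nlinarith [sq_nonneg (lam - 6/5), mul_nonneg hlam.le (sq_nonneg (lam - 1))]
  · have hlow := lam_add_le_poissonOrderH_succ (k := k) (n := k - 1) (by omega) hlam.le
    rw [Nat.sub_add_cancel (by omega), Nat.cast_sub (by omega), Nat.cast_one] at hlow
    have hkR : (3 : ℝ) ≤ k := by exact_mod_cast hk3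
    nlinarith [sq_nonneg (((k : ℝ) - 1) * lam - k)]
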